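/- arXiv:0903.0610 — 2 statements merged into one kernel-verified Lean document; each statement's English description precedes it below -/
import Mathlib

section
/- Suppose φ''_F > 0 > φ''_{2F} and φ''_F + 8φ''_{2F} > 0. Then inf_{v ∈ V_0, ‖Dv‖_{ℓ^∞} = 1} sup_{w ∈ V_0, ‖Dw‖_{ℓ^1_ε} = 1} ⟨L^{qcf} v, w⟩ ≥ (1/2)(φ''_F + 8φ''_{2F}). Consequently, for any f, the system L^{qcf} u = f with u ∈ V_0 has a unique solution u satisfying ‖Du‖_{ℓ^∞} ≤ 2‖f‖_* / (φ''_F + 8φ''_{2F}), where ‖f‖_* = sup_{w ∈ V_0, ‖Dw‖_{ℓ^1_ε}=1} ⟨f, w⟩. -/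
/-!
Write `σ = qcfStress`; then `ε (L^{qcf} v)_j = σ_j - σ_{j+1}`, so testing `L^{qcf} v` against
`±1/2` times the indicator of `[a, b)` gives `2 ‖L^{qcf} v‖_* ≥ |σ_a - σ_b|`. Take `a` and `b`
where `Dv` is largest and smallest. The local part of `σ_a - σ_b` is
`(φ''_F + 4φ''_{2F}) (Dv_a - Dv_b)`, while the nonlocal correction is `φ''_{2F}` times a
difference of two second differences of `Dv`, each of size at most `2 (Dv_a - Dv_b)`. Hence
`2 ‖L^{qcf} v‖_* ≥ (φ''_F + 8φ''_{2F}) (max Dv - min Dv) ≥ (φ''_F + 8φ''_{2F}) ‖Dv‖_∞`, the last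
step because `Dv` has mean zero. This estimate makes `L^{qcf}` injective on `V₀`, hence
invertible there, and bounds the solution.
-/

noncomputable def eps (N : ℤ) : ℝ := 1 / (N : ℝ)

noncomputable def Dd (N : ℤ) (v : ℤ → ℝ) (j : ℤ) : ℝ := (v j - v (j-1)) / eps N

noncomputable def L1op (N : ℤ) (v : ℤ → ℝ) (j : ℤ) : ℝ :=
  (-v (j+1) + 2 * v j - v (j-1)) / (eps N)^2

noncomputable def L2op (N K : ℤ) (v : ℤ → ℝ) (j : ℤ) : ℝ :=
  if -K ≤ j ∧ j ≤ K then (-v (j+2) + 2 * v j - v (j-2)) / (eps N)^2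
  else 4 * (-v (j+1) + 2 * v j - v (j-1)) / (eps N)^2

noncomputable def Lqcf (N K : ℤ) (φF φ2F : ℝ) (v : ℤ → ℝ) (j : ℤ) : ℝ :=
  φF * L1op N v j + φ2F * L2op N K v j

/-- `sup_{w ∈ V₀, ‖Dw‖_{ℓ¹_ε} = 1} ⟨g, w⟩`, the dual norm of `g`. -/
noncomputable def dualNorm (N : ℤ) (g : ℤ → ℝ) : ℝ :=
  sSup { y : ℝ | ∃ w : ℤ → ℝ, w (-N) = 0 ∧ w N = 0 ∧
    eps N * ∑ j ∈ Finset.Icc (-N+1) N, |Dd N w j| = 1 ∧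
    y = eps N * ∑ j ∈ Finset.Icc (-N) N, g j * w j }

open Finset

lemma eps_ne_zero {N : ℤ} (hN : N ≠ 0) : eps N ≠ 0 := by
  simpa [eps] using hN

lemma eps_pos {N : ℤ} (hN : 0 < N) : 0 < eps N := by
  simpa [eps] using hN

lemma eps_mul_sum_Icc_Dd {N : ℤ} (hN : N ≠ 0) (v : ℤ → ℝ) {a b : ℤ} (hab : a ≤ b) :
    eps N * ∑ j ∈ Icc (a + 1) b, Dd N v j = v b - v a := by
  induction b, hab using Int.leInduction with
  | base => simp
  | succ b hab ih =>
    rw [Icc_add_one_left_eq_Ioc, ← insert_Ioc_right_eq_Ioc_add_one hab,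
      sum_insert (by simp), mul_add, ← Icc_add_one_left_eq_Ioc, ih, Dd,
      mul_div_cancel₀ _ (eps_ne_zero hN), add_sub_cancel_right]
    ring

lemma sum_Ico_sub_succ {M : Type*} [AddCommGroup M] (f : ℤ → M) {a b : ℤ} (hab : a ≤ b) :
    ∑ j ∈ Ico a b, (f j - f (j + 1)) = f a - f b := by
  induction b, hab using Int.leInduction with
  | base => simp
  | succ b hab ih =>
    rw [← insert_Ico_right_eq_Ico_add_one hab, sum_insert (by simp), ih]
    abel

noncomputable def secondDiff (N : ℤ) (v : ℤ → ℝ) (p : ℤ) : ℝ :=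
  Dd N v (p - 1) - 2 * Dd N v p + Dd N v (p + 1)

/-- Up to an additive constant, the stress `E^{qcf} Dv` of the paper: the next-nearest-neighbour
interaction contributes `φ''_{2F}` times the second difference of `Dv` at the point of
`[-K, K + 1]` nearest to `a`. -/
noncomputable def qcfStress (N K : ℤ) (φF φ2F : ℝ) (v : ℤ → ℝ) (a : ℤ) : ℝ :=
  (φF + 4 * φ2F) * Dd N v a + φ2F * secondDiff N v (max (-K) (min a (K + 1)))

lemma eps_mul_Lqcf_eq_qcfStress_sub {N : ℤ} (hN : N ≠ 0) (K : ℤ) (φF φ2F : ℝ) (v : ℤ → ℝ)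
    (j : ℤ) :
    eps N * Lqcf N K φF φ2F v j = qcfStress N K φF φ2F v j - qcfStress N K φF φ2F v (j + 1) := by
  have hε := eps_ne_zero hN
  simp only [qcfStress, secondDiff, Lqcf, L1op, L2op]
  by_cases hA : -K ≤ j ∧ j ≤ K
  · rw [if_pos hA, show max (-K) (min j (K + 1)) = j by omega,
      show max (-K) (min (j + 1) (K + 1)) = j + 1 by omega]
    simp only [Dd, add_sub_cancel_right, sub_sub, one_add_one_eq_two]
    rw [add_assoc, one_add_one_eq_two]
    field_simp
    ring
  · rw [if_neg hA, show max (-K) (min (j + 1) (K + 1)) = max (-K) (min j (K + 1)) by omega]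
    simp only [Dd, add_sub_cancel_right]
    field_simp
    ring

lemma eps_mul_sum_Ico_Lqcf_eq_qcfStress_sub {N : ℤ} (hN : N ≠ 0) (K : ℤ) (φF φ2F : ℝ) (v : ℤ → ℝ)
    {a b : ℤ} (hab : a ≤ b) :
    eps N * ∑ j ∈ Ico a b, Lqcf N K φF φ2F v j
      = qcfStress N K φF φ2F v a - qcfStress N K φF φ2F v b := by
  rw [mul_sum, sum_congr rfl fun j _ => eps_mul_Lqcf_eq_qcfStress_sub hN K φF φ2F v j,
    sum_Ico_sub_succ _ hab]

lemma abs_secondDiff_le {N : ℤ} {v : ℤ → ℝ} {a b p : ℤ}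
    (hmax : ∀ j ∈ Icc (-N + 1) N, Dd N v j ≤ Dd N v a)
    (hmin : ∀ j ∈ Icc (-N + 1) N, Dd N v b ≤ Dd N v j)
    (hp : p - 1 ∈ Icc (-N + 1) N) (hp' : p + 1 ∈ Icc (-N + 1) N) :
    |secondDiff N v p| ≤ 2 * (Dd N v a - Dd N v b) := by
  have hp₀ : p ∈ Icc (-N + 1) N := by simp only [mem_Icc] at hp hp' ⊢; omega
  have := hmax _ hp; have := hmax _ hp₀; have := hmax _ hp'
  have := hmin _ hp; have := hmin _ hp₀; have := hmin _ hp'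
  rw [secondDiff, abs_le]
  constructor <;> linarith

lemma mul_osc_le_qcfStress_sub {N K : ℤ} (hK : 0 ≤ K) (hKN : K + 2 ≤ N) {φF φ2F : ℝ}
    (h2F : φ2F ≤ 0) {v : ℤ → ℝ} {a b : ℤ}
    (hmax : ∀ j ∈ Icc (-N + 1) N, Dd N v j ≤ Dd N v a)
    (hmin : ∀ j ∈ Icc (-N + 1) N, Dd N v b ≤ Dd N v j) :
    (φF + 8 * φ2F) * (Dd N v a - Dd N v b)
      ≤ qcfStress N K φF φ2F v a - qcfStress N K φF φ2F v b := by
  have hsd : ∀ c, |secondDiff N v (max (-K) (min c (K + 1)))| ≤ 2 * (Dd N v a - Dd N v b) :=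
    fun c => abs_secondDiff_le hmax hmin (by simp only [mem_Icc]; omega)
      (by simp only [mem_Icc]; omega)
  have hcorr := mul_le_mul_of_nonpos_left
    ((le_abs_self _).trans ((abs_sub _ _).trans (add_le_add (hsd a) (hsd b)))) h2F
  rw [qcfStress, qcfStress]
  linarith

lemma abs_le_eps_mul_sum_abs_Dd {N : ℤ} (hN : 0 < N) {w : ℤ → ℝ} (hw : w (-N) = 0) {j : ℤ}
    (hj : j ∈ Icc (-N) N) :
    |w j| ≤ eps N * ∑ i ∈ Icc (-N + 1) N, |Dd N w i| := by
  have hε := eps_pos hN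
  simp only [mem_Icc] at hj
  rw [← sub_zero (w j), ← hw, ← eps_mul_sum_Icc_Dd hN.ne' w hj.1, abs_mul, abs_of_pos hε]
  gcongr
  exact (abs_sum_le_sum_abs _ _).trans
    (sum_le_sum_of_subset_of_nonneg (Icc_subset_Icc_right hj.2) fun _ _ _ => abs_nonneg _)

lemma dualNorm_set_bddAbove {N : ℤ} (hN : 0 < N) (g : ℤ → ℝ) :
    BddAbove { y : ℝ | ∃ w : ℤ → ℝ, w (-N) = 0 ∧ w N = 0 ∧
      eps N * ∑ j ∈ Icc (-N+1) N, |Dd N w j| = 1 ∧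
      y = eps N * ∑ j ∈ Icc (-N) N, g j * w j } := by
  refine ⟨eps N * ∑ j ∈ Icc (-N) N, |g j|, ?_⟩
  rintro _ ⟨w, hw, -, hnorm, rfl⟩
  gcongr with j hj
  · exact (eps_pos hN).le
  calc g j * w j ≤ |g j| * |w j| := (le_abs_self _).trans (abs_mul _ _).le
    _ ≤ |g j| * 1 := by gcongr; exact hnorm ▸ abs_le_eps_mul_sum_abs_Dd hN hw hj
    _ = |g j| := mul_one _

lemma mul_eps_sum_Ico_le_dualNorm {N a b : ℤ} (ha : -N < a) (hab : a < b) (hb : b ≤ N)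
    (g : ℤ → ℝ) {s : ℝ} (hs : |s| = 1 / 2) :
    s * (eps N * ∑ j ∈ Ico a b, g j) ≤ dualNorm N g := by
  have hN : 0 < N := by omega
  have hε := eps_pos hN
  set w : ℤ → ℝ := fun j => if j ∈ Ico a b then s else 0 with hw
  have hDd : ∀ j, Dd N w j = ((if j ∈ Ico a b then s else 0) -
      (if j - 1 ∈ Ico a b then s else 0)) / eps N := fun j => rfl
  have hDa : Dd N w a = s / eps N := by simp [hDd, hab]
  have hDb : Dd N w b = -s / eps N := by simp [hDd, hab]
  have hD0 : ∀ c, c ≠ a → c ≠ b → Dd N w c = 0 := by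
    intro c hca hcb
    have : c ∈ Ico a b ↔ c - 1 ∈ Ico a b := by simp only [mem_Ico]; omega
    simp only [hDd, this, sub_self, zero_div]
  refine le_csSup (dualNorm_set_bddAbove hN g) ⟨w, ?_, ?_, ?_, ?_⟩
  · simp only [hw, mem_Ico, ite_eq_right_iff]; omega
  · simp only [hw, mem_Ico, ite_eq_right_iff]; omega
  · rw [sum_eq_add a b hab.ne (fun c _ hc => by rw [hD0 c hc.1 hc.2, abs_zero])
      (fun h => by simp only [mem_Icc] at h; omega) (fun h => by simp only [mem_Icc] at h; omega),
      hDa, hDb, abs_div, abs_div, abs_neg, abs_of_pos hε, hs]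
    field_simp
    norm_num
  · have hsub : Ico a b ⊆ Icc (-N) N := Ico_subset_Icc_self.trans (Icc_subset_Icc ha.le hb)
    simp only [hw, mul_ite, mul_zero]
    rw [sum_ite_mem, inter_eq_right.mpr hsub, ← sum_mul]
    ring

lemma abs_eps_mul_sum_Ico_le_dualNorm {N a b : ℤ} (ha : -N < a) (hab : a < b) (hb : b ≤ N)
    (g : ℤ → ℝ) :
    |eps N * ∑ j ∈ Ico a b, g j| ≤ 2 * dualNorm N g := by
  have h₁ := mul_eps_sum_Ico_le_dualNorm ha hab hb g (s := 1 / 2) (by norm_num)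
  have h₂ := mul_eps_sum_Ico_le_dualNorm ha hab hb g (s := -(1 / 2)) (by norm_num)
  rw [abs_le]
  constructor <;> linarith

lemma dualNorm_nonneg {N : ℤ} (hN : 0 < N) (g : ℤ → ℝ) : 0 ≤ dualNorm N g := by
  have := abs_eps_mul_sum_Ico_le_dualNorm (by omega : -N < -N + 1) (by omega) le_rfl g
  linarith [abs_nonneg (eps N * ∑ j ∈ Ico (-N + 1) N, g j)]

lemma dualNorm_congr {N : ℤ} {g g' : ℤ → ℝ} (h : ∀ j ∈ Icc (-N + 1) (N - 1), g j = g' j) :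
    dualNorm N g = dualNorm N g' := by
  have hpair : ∀ w : ℤ → ℝ, w (-N) = 0 → w N = 0 →
      ∑ j ∈ Icc (-N) N, g j * w j = ∑ j ∈ Icc (-N) N, g' j * w j := by
    intro w hw₀ hw₁
    refine sum_congr rfl fun j hj => ?_
    by_cases hint : j ∈ Icc (-N + 1) (N - 1)
    · rw [h j hint]
    · obtain rfl | rfl : j = -N ∨ j = N := by simp only [mem_Icc] at hj hint; omega
      all_goals simp [hw₀, hw₁]
  unfold dualNorm
  congr 1
  ext y
  constructor <;> rintro ⟨w, hw₀, hw₁, hnorm, rfl⟩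
  · exact ⟨w, hw₀, hw₁, hnorm, by rw [hpair w hw₀ hw₁]⟩
  · exact ⟨w, hw₀, hw₁, hnorm, by rw [hpair w hw₀ hw₁]⟩

lemma dualNorm_zero {N : ℤ} (hN : 0 < N) : dualNorm N 0 = 0 := by
  refine le_antisymm (Real.sSup_nonpos fun y ⟨w, _, _, _, hy⟩ => by simp [hy]) ?_
  exact dualNorm_nonneg hN 0

lemma abs_qcfStress_sub_le_dualNorm {N : ℤ} (K : ℤ) (φF φ2F : ℝ) (v : ℤ → ℝ) {a b : ℤ}
    (ha : a ∈ Icc (-N + 1) N) (hb : b ∈ Icc (-N + 1) N) :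
    |qcfStress N K φF φ2F v a - qcfStress N K φF φ2F v b|
      ≤ 2 * dualNorm N (Lqcf N K φF φ2F v) := by
  wlog hab : a ≤ b generalizing a b
  · rw [abs_sub_comm]
    exact this hb ha (le_of_not_ge hab)
  simp only [mem_Icc] at ha hb
  rcases hab.lt_or_eq with hlt | rfl
  · rw [← eps_mul_sum_Ico_Lqcf_eq_qcfStress_sub (by omega) K φF φ2F v hab]
    exact abs_eps_mul_sum_Ico_le_dualNorm (by omega) hlt hb.2 _
  · simpa using dualNorm_nonneg (by omega) _

lemma sum_Dd_eq_zero {N : ℤ} (hN : 0 < N) {v : ℤ → ℝ} (h₀ : v (-N) = 0) (h₁ : v N = 0) :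
    ∑ j ∈ Icc (-N + 1) N, Dd N v j = 0 := by
  have := eps_mul_sum_Icc_Dd hN.ne' v (by omega : -N ≤ N)
  rw [h₀, h₁, sub_zero, mul_eq_zero] at this
  exact this.resolve_left (eps_pos hN).ne'

theorem mul_abs_Dd_le_dualNorm_Lqcf {N K : ℤ} (hK : 0 ≤ K) (hKN : K + 2 ≤ N) {φF φ2F : ℝ}
    (h2F : φ2F ≤ 0) (hstab : 0 ≤ φF + 8 * φ2F) {v : ℤ → ℝ} (h₀ : v (-N) = 0) (h₁ : v N = 0)
    {i : ℤ} (hi : i ∈ Icc (-N + 1) N) :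
    (φF + 8 * φ2F) * |Dd N v i| ≤ 2 * dualNorm N (Lqcf N K φF φ2F v) := by
  have hN : 0 < N := by omega
  have hI : (Icc (-N + 1) N).Nonempty := ⟨N, by simp only [mem_Icc]; omega⟩
  obtain ⟨a, ha, hmax⟩ := (Icc (-N + 1) N).exists_max_image (Dd N v) hI
  obtain ⟨b, hb, hmin⟩ := (Icc (-N + 1) N).exists_min_image (Dd N v) hI
  -- `Dv` has mean zero, so it takes both signs
  obtain ⟨c, hc, hc₀⟩ := exists_le_of_sum_le hI
    (by simp [sum_Dd_eq_zero hN h₀ h₁] : ∑ j ∈ Icc (-N + 1) N, Dd N v j ≤ ∑ _j ∈ Icc (-N + 1) N, 0)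
  obtain ⟨d, hd, hd₀⟩ := exists_le_of_sum_le hI
    (by simp [sum_Dd_eq_zero hN h₀ h₁] : ∑ _j ∈ Icc (-N + 1) N, 0 ≤ ∑ j ∈ Icc (-N + 1) N, Dd N v j)
  have hosc : |Dd N v i| ≤ Dd N v a - Dd N v b := by
    have := hmax i hi; have := hmin i hi; have := hmax d hd; have := hmin c hc
    rw [abs_le]
    constructor <;> linarith
  calc (φF + 8 * φ2F) * |Dd N v i| ≤ (φF + 8 * φ2F) * (Dd N v a - Dd N v b) :=
        mul_le_mul_of_nonneg_left hosc hstab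
    _ ≤ qcfStress N K φF φ2F v a - qcfStress N K φF φ2F v b :=
        mul_osc_le_qcfStress_sub hK hKN h2F hmax hmin
    _ ≤ 2 * dualNorm N (Lqcf N K φF φ2F v) :=
        (le_abs_self _).trans (abs_qcfStress_sub_le_dualNorm K φF φ2F v ha hb)

lemma eq_zero_of_Lqcf_eq_zero {N K : ℤ} (hK : 0 ≤ K) (hKN : K + 2 ≤ N) {φF φ2F : ℝ}
    (h2F : φ2F ≤ 0) (hstab : 0 < φF + 8 * φ2F) (v : ℤ → ℝ) (h₀ : v (-N) = 0) (h₁ : v N = 0)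
    (hL : ∀ j ∈ Icc (-N + 1) (N - 1), Lqcf N K φF φ2F v j = 0) :
    ∀ j ∈ Icc (-N) N, v j = 0 := by
  have hN : 0 < N := by omega
  have hdual : dualNorm N (Lqcf N K φF φ2F v) = 0 := (dualNorm_congr hL).trans (dualNorm_zero hN)
  have hD : ∀ i ∈ Icc (-N + 1) N, Dd N v i = 0 := fun i hi => by
    have := mul_abs_Dd_le_dualNorm_Lqcf hK hKN h2F hstab.le h₀ h₁ (K := K) hi
    rw [hdual, mul_zero] at this
    exact abs_eq_zero.mp (le_antisymm (nonpos_of_mul_nonpos_right this hstab) (abs_nonneg _))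
  intro j hj
  simp only [mem_Icc] at hj
  have := eps_mul_sum_Icc_Dd hN.ne' v hj.1
  rw [sum_eq_zero fun i hi => hD i (Icc_subset_Icc_right hj.2 hi), mul_zero, h₀] at this
  linarith

noncomputable def lqcfLinearMap (N K : ℤ) (φF φ2F : ℝ) : (ℤ → ℝ) →ₗ[ℝ] (ℤ → ℝ) where
  toFun := Lqcf N K φF φ2F
  map_add' v w := by
    ext j
    simp only [Lqcf, L1op, L2op, Pi.add_apply]
    split_ifs <;> ring
  map_smul' c v := by
    ext j
    simp only [Lqcf, L1op, L2op, Pi.smul_apply, smul_eq_mul, RingHom.id_apply]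
    split_ifs <;> ring

lemma exists_solution_of_unique {N : ℤ} (L : (ℤ → ℝ) →ₗ[ℝ] (ℤ → ℝ))
    (hL : ∀ v : ℤ → ℝ, v (-N) = 0 → v N = 0 → (∀ j ∈ Icc (-N + 1) (N - 1), L v j = 0) →
      ∀ j ∈ Icc (-N) N, v j = 0)
    (f : ℤ → ℝ) :
    ∃ u : ℤ → ℝ, u (-N) = 0 ∧ u N = 0 ∧ ∀ j ∈ Icc (-N + 1) (N - 1), L u j = f j := by
  let I := Icc (-N + 1) (N - 1)
  let E := Function.ExtendByZero.linearMap ℝ ((↑) : I → ℤ)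
  let T := LinearMap.funLeft ℝ ℝ ((↑) : I → ℤ) ∘ₗ L ∘ₗ E
  have hE_out : ∀ x j, j ∉ I → E x j = 0 := fun x j hj =>
    Function.extend_apply' _ _ _ fun ⟨i, hi⟩ => hj (hi ▸ i.2)
  have hE_in : ∀ x (i : I), E x i = x i := fun x i =>
    Subtype.val_injective.extend_apply _ _ _
  have hE₀ : ∀ x, E x (-N) = 0 := fun x => hE_out x _ (by simp [I])
  have hE₁ : ∀ x, E x N = 0 := fun x => hE_out x _ (by simp [I])
  have hT : Function.Injective T := by
    rw [injective_iff_map_eq_zero]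
    intro x hx
    ext i
    have := hL (E x) (hE₀ x) (hE₁ x) (fun j hj => congrFun hx ⟨j, hj⟩) i
      (Icc_subset_Icc (by omega) (by omega) i.2)
    rwa [hE_in] at this
  obtain ⟨x, hx⟩ := LinearMap.injective_iff_surjective.mp hT fun i => f i
  exact ⟨E x, hE₀ x, hE₁ x, fun j hj => congrFun hx ⟨j, hj⟩⟩

lemma exists_abs_Dd_eq_one {N : ℤ} (hN : 0 < N) :
    ∃ v : ℤ → ℝ, v (-N) = 0 ∧ v N = 0 ∧
      (∀ j ∈ Icc (-N + 1) N, |Dd N v j| ≤ 1) ∧ (∃ j ∈ Icc (-N + 1) N, |Dd N v j| = 1) := by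
  have hε := (eps_pos hN).ne'
  have hD : ∀ j, Dd N (fun i => if i = 0 then eps N else 0) j
      = (if j = 0 then 1 else 0) - (if j - 1 = 0 then 1 else 0) := fun j => by
    simp only [Dd]
    split_ifs <;> field_simp <;> norm_num
  refine ⟨fun i => if i = 0 then eps N else 0, by simp only [ite_eq_right_iff]; omega,
    by simp only [ite_eq_right_iff]; omega,
    fun j _ => ?_, ⟨0, by simp only [mem_Icc]; omega, by simp [hD]⟩⟩
  rw [hD]
  split_ifs <;> norm_num

theorem Lqcf_infsup_stability_general (N K : ℤ) (hK : 2 ≤ K) (hKN : 2 * K ≤ N)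
    (φF φ2F : ℝ) (h2F : φ2F < 0) (hstab : 0 < φF + 8 * φ2F) :
    (1/2) * (φF + 8 * φ2F) ≤
      sInf { x : ℝ | ∃ v : ℤ → ℝ, v (-N) = 0 ∧ v N = 0 ∧
        (∀ j ∈ Finset.Icc (-N+1) N, |Dd N v j| ≤ 1) ∧
        (∃ j ∈ Finset.Icc (-N+1) N, |Dd N v j| = 1) ∧
        x = dualNorm N (Lqcf N K φF φ2F v) } ∧
    ∀ f : ℤ → ℝ, ∃ u : ℤ → ℝ,
      (u (-N) = 0 ∧ u N = 0 ∧
        (∀ j ∈ Finset.Icc (-N+1) (N-1), Lqcf N K φF φ2F u j = f j) ∧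
        (∀ j ∈ Finset.Icc (-N+1) N,
          |Dd N u j| ≤ 2 * dualNorm N f / (φF + 8 * φ2F))) ∧
      ∀ u' : ℤ → ℝ, u' (-N) = 0 → u' N = 0 →
        (∀ j ∈ Finset.Icc (-N+1) (N-1), Lqcf N K φF φ2F u' j = f j) →
        ∀ j ∈ Finset.Icc (-N) N, u' j = u j := by
  have hK₀ : 0 ≤ K := by omega
  have hKN₂ : K + 2 ≤ N := by omega
  have hest := fun {v : ℤ → ℝ} => mul_abs_Dd_le_dualNorm_Lqcf (v := v) hK₀ hKN₂ h2F.le hstab.le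
  have huniq := eq_zero_of_Lqcf_eq_zero hK₀ hKN₂ h2F.le hstab
  refine ⟨le_csInf ?_ ?_, fun f => ?_⟩
  · obtain ⟨v, h₀, h₁, hbd, hnorm⟩ := exists_abs_Dd_eq_one (by omega : 0 < N)
    exact ⟨_, v, h₀, h₁, hbd, hnorm, rfl⟩
  · rintro _ ⟨v, h₀, h₁, -, ⟨i, hi, hv⟩, rfl⟩
    linarith [hv ▸ hest h₀ h₁ hi]
  obtain ⟨u, h₀, h₁, hu⟩ : ∃ u : ℤ → ℝ, u (-N) = 0 ∧ u N = 0 ∧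
      ∀ j ∈ Icc (-N + 1) (N - 1), Lqcf N K φF φ2F u j = f j :=
    exists_solution_of_unique (lqcfLinearMap N K φF φ2F) huniq f
  refine ⟨u, ⟨h₀, h₁, hu, fun j hj => ?_⟩, fun u' h₀' h₁' hu' j hj => ?_⟩
  · rw [le_div_iff₀ hstab, ← dualNorm_congr hu, mul_comm]
    exact hest h₀ h₁ hj
  · refine sub_eq_zero.mp
      (huniq (u' - u) (by simp [h₀, h₀']) (by simp [h₁, h₁']) (fun i hi => ?_) j hj)
    exact (congrFun (map_sub (lqcfLinearMap N K φF φ2F) u' u) i).trans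
      (sub_eq_zero.mpr ((hu' i hi).trans (hu i hi).symm))

/-- Stability of the force-based QC operator: if `φ''_F > 0 > φ''_{2F}` and
`φ''_F + 8φ''_{2F} > 0`, then the `ℓ∞`-`ℓ¹` inf-sup constant of `L^{qcf}` is at
least `(φ''_F + 8φ''_{2F})/2`, and for every `f` the system `L^{qcf}u = f`,
`u ∈ V₀`, has a unique solution satisfying
`‖Du‖_{ℓ∞} ≤ 2‖f‖_* / (φ''_F + 8φ''_{2F})`. -/
theorem Lqcf_infsup_stability (N K : ℤ) (hN : 1 ≤ N) (hK : 2 ≤ K) (hKN : 2 * K ≤ N)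
    (φF φ2F : ℝ) (hF : 0 < φF) (h2F : φ2F < 0) (hstab : 0 < φF + 8 * φ2F) :
    (1/2) * (φF + 8 * φ2F) ≤
      sInf { x : ℝ | ∃ v : ℤ → ℝ, v (-N) = 0 ∧ v N = 0 ∧
        (∀ j ∈ Finset.Icc (-N+1) N, |Dd N v j| ≤ 1) ∧
        (∃ j ∈ Finset.Icc (-N+1) N, |Dd N v j| = 1) ∧
        x = dualNorm N (Lqcf N K φF φ2F v) } ∧
    ∀ f : ℤ → ℝ, ∃ u : ℤ → ℝ,
      (u (-N) = 0 ∧ u N = 0 ∧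
        (∀ j ∈ Finset.Icc (-N+1) (N-1), Lqcf N K φF φ2F u j = f j) ∧
        (∀ j ∈ Finset.Icc (-N+1) N,
          |Dd N u j| ≤ 2 * dualNorm N f / (φF + 8 * φ2F))) ∧
      ∀ u' : ℤ → ℝ, u' (-N) = 0 → u' N = 0 →
        (∀ j ∈ Finset.Icc (-N+1) (N-1), Lqcf N K φF φ2F u' j = f j) →
        ∀ j ∈ Finset.Icc (-N) N, u' j = u j :=
  Lqcf_infsup_stability_general N K hK hKN φF φ2F h2F hstab
end

section
/- Suppose φ''_F > 0, φ''_{2F} ≠ 0, 1 ≤ p < ∞ and 1/p + 1/q = 1. Then there exists a constant C > 0, independent of N and K, such that for all 2 ≤ K ≤ N/2: inf_{v ∈ V_0, ‖Dv‖_{ℓ^p_ε}=1} sup_{w ∈ V_0, ‖Dw‖_{ℓ^q_ε}=1} ⟨L^{qcf} v, w⟩ ≤ C N^{-1/p}. In particular, the ℓ^p–ℓ^q inf-sup constant of L^{qcf} tends to zero as N → ∞ for every finite p. -/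
/-- `ℓ^p_ε` norm on `ℝ^{2N}` (indices `-N+1,…,N`), for `1 ≤ p < ∞`. -/
noncomputable def lpNorm (N : ℤ) (p : ℝ) (ξ : ℤ → ℝ) : ℝ :=
  (eps N * ∑ j ∈ Finset.Icc (-N+1) N, |ξ j| ^ p) ^ (1/p)

/-- The dual `ℓ^q_ε` norm with `1/p + 1/q = 1`: the `ℓ∞` norm when `p = 1`, and
the `ℓ^{p/(p-1)}_ε` norm when `p > 1`. -/
noncomputable def lqNorm (N : ℤ) (p : ℝ) (ξ : ℤ → ℝ) : ℝ :=
  if p = 1 then sSup ((fun j => |ξ j|) '' ↑(Finset.Icc (-N+1) N))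
  else (eps N * ∑ j ∈ Finset.Icc (-N+1) N, |ξ j| ^ (p/(p-1))) ^ ((p-1)/p)

/-! ### Auxiliary construction: a piecewise linear test function with two kinks
at the interface `K`, chosen so that `Lqcf` of it is supported on `{K-1,K,K+1}`
with coefficients summing to zero. -/

noncomputable def sl0 (N K : ℤ) (φF φ2F : ℝ) : ℝ :=
  -((φF + 5*φ2F) * ((N:ℝ) - K) - (φF + 3*φ2F) * ((N:ℝ) - K - 1)) / (2 * N)

noncomputable def vh (N K : ℤ) (φF φ2F : ℝ) (j : ℤ) : ℝ :=
  eps N * (sl0 N K φF φ2F * ((j:ℝ) + N)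
    + (φF + 5*φ2F) * max ((j:ℝ) - K) 0
    - (φF + 3*φ2F) * max ((j:ℝ) - K - 1) 0)

lemma Lqcf_smul (N K : ℤ) (a b c : ℝ) (v : ℤ → ℝ) (j : ℤ) :
    Lqcf N K a b (fun i => c * v i) j = c * Lqcf N K a b v j := by
  unfold Lqcf L1op L2op
  split_ifs <;> ring

lemma Dd_smul (N : ℤ) (c : ℝ) (v : ℤ → ℝ) (j : ℤ) :
    Dd N (fun i => c * v i) j = c * Dd N v j := by
  unfold Dd; ring

lemma Dd_neg (N : ℤ) (v : ℤ → ℝ) (j : ℤ) :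
    Dd N (fun i => -(v i)) j = -(Dd N v j) := by
  unfold Dd; ring

lemma vh_lin (N K : ℤ) (φF φ2F : ℝ) (i : ℤ) (hi : i ≤ K) :
    vh N K φF φ2F i = eps N * (sl0 N K φF φ2F * ((i:ℝ) + N)) := by
  unfold vh
  have h0 : (i:ℝ) ≤ K := by exact_mod_cast hi
  have h1 : (i:ℝ) - K ≤ 0 := by linarith
  have h2 : (i:ℝ) - K - 1 ≤ 0 := by linarith
  rw [max_eq_right h1, max_eq_right h2]; ring

lemma vh_aff (N K : ℤ) (φF φ2F : ℝ) (i : ℤ) (hi : K + 1 ≤ i) :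
    vh N K φF φ2F i = eps N * (sl0 N K φF φ2F * ((i:ℝ) + N)
      + (φF + 5*φ2F) * ((i:ℝ) - K) - (φF + 3*φ2F) * ((i:ℝ) - K - 1)) := by
  unfold vh
  have h0 : (K:ℝ) + 1 ≤ i := by exact_mod_cast hi
  have h1 : (0:ℝ) ≤ (i:ℝ) - K := by linarith
  have h2 : (0:ℝ) ≤ (i:ℝ) - K - 1 := by linarith
  rw [max_eq_left h1, max_eq_left h2]

lemma eps_ne (N : ℤ) (hN : 1 ≤ N) : eps N ≠ 0 := by
  unfold eps
  have : (0:ℝ) < (N:ℝ) := by exact_mod_cast (by omega : (0:ℤ) < N)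
  positivity

lemma row_zero (N K : ℤ) (φF φ2F : ℝ) (hN : 1 ≤ N) (hK : 2 ≤ K)
    (j : ℤ) (hj : j ≤ K-2 ∨ K+2 ≤ j) :
    Lqcf N K φF φ2F (vh N K φF φ2F) j = 0 := by
  have hε := eps_ne N hN
  unfold Lqcf L2op L1op
  rcases hj with hj | hj
  · split_ifs with h
    · rw [vh_lin N K φF φ2F (j+1) (by omega), vh_lin N K φF φ2F j (by omega),
          vh_lin N K φF φ2F (j-1) (by omega), vh_lin N K φF φ2F (j+2) (by omega),
          vh_lin N K φF φ2F (j-2) (by omega)]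
      push_cast
      field_simp
      try ring
    · rw [vh_lin N K φF φ2F (j+1) (by omega), vh_lin N K φF φ2F j (by omega),
          vh_lin N K φF φ2F (j-1) (by omega)]
      push_cast
      field_simp
      try ring
  · rw [if_neg (by omega : ¬(-K ≤ j ∧ j ≤ K))]
    rw [vh_aff N K φF φ2F (j+1) (by omega), vh_aff N K φF φ2F j (by omega),
        vh_aff N K φF φ2F (j-1) (by omega)]
    push_cast
    field_simp
    try ring

lemma row_Km1 (N K : ℤ) (φF φ2F : ℝ) (hN : 1 ≤ N) (hK : 2 ≤ K) :
    Lqcf N K φF φ2F (vh N K φF φ2F) (K-1) = -(φ2F * (φF + 5*φ2F)) / eps N := by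
  have hε := eps_ne N hN
  unfold Lqcf L2op L1op
  rw [if_pos (⟨by omega, by omega⟩ : -K ≤ K-1 ∧ K-1 ≤ K)]
  rw [vh_lin N K φF φ2F (K-1+1) (by omega), vh_lin N K φF φ2F (K-1) (by omega),
      vh_lin N K φF φ2F (K-1-1) (by omega), vh_aff N K φF φ2F (K-1+2) (by omega),
      vh_lin N K φF φ2F (K-1-2) (by omega)]
  push_cast
  field_simp
  try ring

lemma row_K (N K : ℤ) (φF φ2F : ℝ) (hN : 1 ≤ N) (hK : 2 ≤ K) :
    Lqcf N K φF φ2F (vh N K φF φ2F) K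
      = -(φF * (φF + 5*φ2F) + φ2F * (2*(φF + 5*φ2F) - (φF + 3*φ2F))) / eps N := by
  have hε := eps_ne N hN
  unfold Lqcf L2op L1op
  rw [if_pos (⟨by omega, by omega⟩ : -K ≤ K ∧ K ≤ K)]
  rw [vh_aff N K φF φ2F (K+1) (by omega), vh_lin N K φF φ2F K (by omega),
      vh_lin N K φF φ2F (K-1) (by omega), vh_aff N K φF φ2F (K+2) (by omega),
      vh_lin N K φF φ2F (K-2) (by omega)]
  push_cast
  field_simp
  try ring

lemma row_Kp1 (N K : ℤ) (φF φ2F : ℝ) (hN : 1 ≤ N) (hK : 2 ≤ K) :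
    Lqcf N K φF φ2F (vh N K φF φ2F) (K+1)
      = (φF + 4*φ2F) * (φF + 3*φ2F) / eps N := by
  have hε := eps_ne N hN
  unfold Lqcf L2op L1op
  rw [if_neg (by omega : ¬(-K ≤ K+1 ∧ K+1 ≤ K))]
  rw [vh_aff N K φF φ2F (K+1+1) (by omega), vh_aff N K φF φ2F (K+1) (by omega),
      vh_lin N K φF φ2F (K+1-1) (by omega)]
  push_cast
  field_simp
  try ring

lemma Dd_vh_lo (N K : ℤ) (φF φ2F : ℝ) (hN : 1 ≤ N) (i : ℤ) (hi : i ≤ K) :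
    Dd N (vh N K φF φ2F) i = sl0 N K φF φ2F := by
  have hε := eps_ne N hN
  unfold Dd
  rw [vh_lin N K φF φ2F i hi, vh_lin N K φF φ2F (i-1) (by omega)]
  push_cast
  field_simp
  try ring

lemma Dd_vh_hi (N K : ℤ) (φF φ2F : ℝ) (hN : 1 ≤ N) (i : ℤ) (hi : K+2 ≤ i) :
    Dd N (vh N K φF φ2F) i = sl0 N K φF φ2F + 2*φ2F := by
  have hε := eps_ne N hN
  unfold Dd
  rw [vh_aff N K φF φ2F i (by omega), vh_aff N K φF φ2F (i-1) (by omega)]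
  push_cast
  field_simp
  try ring

/-! ### A "tent" function with unit dual norm -/

noncomputable def tentc (p : ℝ) : ℝ := (2:ℝ) ^ (-((p-1)/p))

noncomputable def tent (N : ℤ) (p : ℝ) (j : ℤ) : ℝ :=
  tentc p * eps N * ((min (j+N) (N-j) : ℤ) : ℝ)

lemma tentc_pos (p : ℝ) : 0 < tentc p := Real.rpow_pos_of_pos (by norm_num) _

lemma tent_bd1 (N : ℤ) (p : ℝ) (hN : 1 ≤ N) : tent N p (-N) = 0 := by
  unfold tent
  rw [show min (-N+N) (N-(-N)) = 0 by omega]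
  norm_num

lemma tent_bd2 (N : ℤ) (p : ℝ) (hN : 1 ≤ N) : tent N p N = 0 := by
  unfold tent
  rw [show min (N+N) (N-N) = 0 by omega]
  norm_num

lemma Dd_tent_abs (N : ℤ) (p : ℝ) (hN : 1 ≤ N) (j : ℤ) :
    |Dd N (tent N p) j| = tentc p := by
  have hε := eps_ne N hN
  have hd : (min (j+N) (N-j) : ℤ) - min (j-1+N) (N-(j-1)) = 1 ∨
            (min (j+N) (N-j) : ℤ) - min (j-1+N) (N-(j-1)) = -1 := by omega
  have he : Dd N (tent N p) j
      = tentc p * (((min (j+N) (N-j) : ℤ) : ℝ) - ((min (j-1+N) (N-(j-1)) : ℤ) : ℝ)) := by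
    unfold Dd tent; field_simp
  rcases hd with h | h
  · have h' : ((min (j+N) (N-j) : ℤ) : ℝ) - ((min (j-1+N) (N-(j-1)) : ℤ) : ℝ) = 1 := by
      exact_mod_cast h
    rw [he, h', mul_one, abs_of_pos (tentc_pos p)]
  · have h' : ((min (j+N) (N-j) : ℤ) : ℝ) - ((min (j-1+N) (N-(j-1)) : ℤ) : ℝ) = -1 := by
      exact_mod_cast h
    rw [he, h', mul_neg_one, abs_neg, abs_of_pos (tentc_pos p)]

lemma lqNorm_one (N : ℤ) (p : ℝ) (hN : 1 ≤ N) (hp : 1 ≤ p) (w : ℤ → ℝ)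
    (habs : ∀ j, |Dd N w j| = tentc p) :
    lqNorm N p (fun j => Dd N w j) = 1 := by
  have hp0 : (0:ℝ) < p := by linarith
  by_cases hp1 : p = 1
  · unfold lqNorm; rw [if_pos hp1]
    have hfun : (fun j : ℤ => |Dd N w j|) = fun _ => tentc p := funext habs
    rw [hfun, Set.Nonempty.image_const ⟨N, by simp only [Finset.coe_Icc, Set.mem_Icc]; omega⟩,
        csSup_singleton]
    unfold tentc; rw [hp1]; norm_num
  · have hp1' : 1 < p := lt_of_le_of_ne hp (Ne.symm hp1)
    have hpm : (0:ℝ) < p - 1 := by linarith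
    unfold lqNorm; rw [if_neg hp1]
    have hsum : ∑ j ∈ Finset.Icc (-N+1) N, |Dd N w j| ^ (p/(p-1))
        = ((Finset.Icc (-N+1) N).card : ℝ) * tentc p ^ (p/(p-1)) := by
      rw [Finset.sum_congr rfl (fun j _ => by rw [habs j]), Finset.sum_const, nsmul_eq_mul]
    have hcard : (((Finset.Icc (-N+1) N).card : ℕ) : ℝ) = 2*(N:ℝ) := by
      rw [Int.card_Icc, show (N + 1 - (-N+1)) = 2*N by ring]
      have h2 : ((2*N).toNat : ℤ) = 2*N := Int.toNat_of_nonneg (by omega)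
      exact_mod_cast congrArg (fun z : ℤ => (z:ℝ)) h2
    have hq : tentc p ^ (p/(p-1)) = 2⁻¹ := by
      unfold tentc
      rw [← Real.rpow_mul (by norm_num : (0:ℝ) ≤ 2),
          show (-((p-1)/p))*(p/(p-1)) = -1 by field_simp,
          show (-1:ℝ) = ((-1:ℤ):ℝ) by norm_num, Real.rpow_intCast]
      norm_num
    rw [hsum, hcard, hq]
    have hεN : eps N * (2*(N:ℝ) * 2⁻¹) = 1 := by
      unfold eps
      have hne : (N:ℝ) ≠ 0 := by exact_mod_cast (by omega : N ≠ 0)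
      field_simp
    rw [hεN, Real.one_rpow]

lemma sSup_symm_nonneg (S : Set ℝ) (y : ℝ) (h1 : y ∈ S) (h2 : -y ∈ S) : 0 ≤ sSup S := by
  by_cases hb : BddAbove S
  · have a1 := le_csSup hb h1
    have a2 := le_csSup hb h2
    linarith
  · rw [Real.sSup_of_not_bddAbove hb]

/-- No uniform `ℓ^p`–`ℓ^q` inf-sup stability for `1 ≤ p < ∞`: there is `C > 0`
with `inf_{v∈V₀,‖Dv‖_{ℓ^p_ε}=1} sup_{w∈V₀,‖Dw‖_{ℓ^q_ε}=1} ⟨L^{qcf}v,w⟩ ≤ C N^{-1/p}`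
for all `2 ≤ K ≤ N/2`. -/
theorem Lqcf_no_uniform_lp_infsup (φF φ2F p : ℝ)
    (hF : 0 < φF) (h2F : φ2F ≠ 0) (hp : 1 ≤ p) :
    ∃ C : ℝ, 0 < C ∧
      ∀ N K : ℤ, 1 ≤ N → 2 ≤ K → 2 * K ≤ N →
        sInf { x : ℝ | ∃ v : ℤ → ℝ, v (-N) = 0 ∧ v N = 0 ∧
            lpNorm N p (fun j => Dd N v j) = 1 ∧
            x = sSup { y : ℝ | ∃ w : ℤ → ℝ, w (-N) = 0 ∧ w N = 0 ∧
              lqNorm N p (fun j => Dd N w j) = 1 ∧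
              y = eps N * ∑ j ∈ Finset.Icc (-N+1) (N-1),
                Lqcf N K φF φ2F v j * w j } } ≤
          C * (N : ℝ) ^ (-(1/p)) := by
  have hp0 : (0:ℝ) < p := by linarith
  have hpne : p ≠ 0 := ne_of_gt hp0
  have habs2 : (0:ℝ) < |φ2F| := abs_pos.mpr h2F
  set E : ℝ := |φ2F * (φF + 5*φ2F)| + |(φF + 4*φ2F) * (φF + 3*φ2F)| with hE
  have hEnn : (0:ℝ) ≤ E := by rw [hE]; positivity
  have hCnn : (0:ℝ) ≤ E * 4 / |φ2F| :=
    div_nonneg (by linarith) (abs_nonneg _)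
  refine ⟨E * 4 / |φ2F| + 1, by linarith, ?_⟩
  intro N K hN1 hK2 hKN
  have hN4 : (4:ℤ) ≤ N := by omega
  have hNR : (0:ℝ) < (N:ℝ) := by exact_mod_cast (by omega : (0:ℤ) < N)
  have hεpos : 0 < eps N := by unfold eps; positivity
  have hεne : eps N ≠ 0 := ne_of_gt hεpos
  have hXnn : (0:ℝ) ≤ (N:ℝ) ^ (-(1/p)) := Real.rpow_nonneg hNR.le _
  -- the norm of the unscaled test function
  set SD : ℝ := eps N * ∑ j ∈ Finset.Icc (-N+1) N, |Dd N (vh N K φF φ2F) j| ^ p with hSDdef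
  have hSDnn : 0 ≤ SD := by
    rw [hSDdef]
    exact mul_nonneg hεpos.le (Finset.sum_nonneg fun i _ => Real.rpow_nonneg (abs_nonneg _) p)
  -- a generic lower bound for SD from a constant stretch
  have key : ∀ (a b : ℤ) (s c : ℝ), -N+1 ≤ a → b ≤ N → a ≤ b →
      (∀ i, a ≤ i → i ≤ b → Dd N (vh N K φF φ2F) i = s) →
      (((b+1-a).toNat : ℝ) = c) →
      eps N * (c * |s| ^ p) ≤ SD := by
    intro a b s c ha hb hab hconst hc
    rw [hSDdef]
    have hsub : Finset.Icc a b ⊆ Finset.Icc (-N+1) N := Finset.Icc_subset_Icc ha hb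
    have h1 : ∑ j ∈ Finset.Icc a b, |Dd N (vh N K φF φ2F) j| ^ p
        ≤ ∑ j ∈ Finset.Icc (-N+1) N, |Dd N (vh N K φF φ2F) j| ^ p :=
      Finset.sum_le_sum_of_subset_of_nonneg hsub (fun i _ _ => Real.rpow_nonneg (abs_nonneg _) p)
    have h2 : ∑ j ∈ Finset.Icc a b, |Dd N (vh N K φF φ2F) j| ^ p = c * |s| ^ p := by
      rw [Finset.sum_congr rfl (fun j hj => by
            rw [hconst j (Finset.mem_Icc.mp hj).1 (Finset.mem_Icc.mp hj).2]),
          Finset.sum_const, nsmul_eq_mul, Int.card_Icc, hc]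
    rw [← h2]
    exact mul_le_mul_of_nonneg_left h1 hεpos.le
  have hSD4 : (1/4) * |φ2F| ^ p ≤ SD := by
    have hphinn : (0:ℝ) ≤ |φ2F| ^ p := Real.rpow_nonneg (abs_nonneg _) p
    by_cases hcase : |φ2F| ≤ |sl0 N K φF φ2F|
    · have hc : (((K+1-(-N+1)).toNat : ℤ) = K+N) := by omega
      have hc' : (((K+1-(-N+1)).toNat : ℕ) : ℝ) = (K:ℝ)+(N:ℝ) := by exact_mod_cast hc
      have hk := key (-N+1) K (sl0 N K φF φ2F) ((K:ℝ)+(N:ℝ)) le_rfl (by omega) (by omega)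
        (fun i _ hi => Dd_vh_lo N K φF φ2F hN1 i hi) hc'
      have t1 : |φ2F| ^ p ≤ |sl0 N K φF φ2F| ^ p :=
        Real.rpow_le_rpow (abs_nonneg _) hcase hp0.le
      have hA : (1:ℝ) ≤ eps N * ((K:ℝ)+(N:ℝ)) := by
        unfold eps
        rw [div_mul_eq_mul_div, one_mul, le_div_iff₀ hNR]
        have : (0:ℝ) ≤ (K:ℝ) := by exact_mod_cast (by omega : (0:ℤ) ≤ K)
        linarith
      calc (1/4) * |φ2F| ^ p ≤ 1 * |φ2F| ^ p := by linarith
        _ ≤ (eps N * ((K:ℝ)+(N:ℝ))) * |sl0 N K φF φ2F| ^ p :=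
            mul_le_mul hA t1 hphinn (by positivity)
        _ = eps N * (((K:ℝ)+(N:ℝ)) * |sl0 N K φF φ2F| ^ p) := by ring
        _ ≤ SD := hk
    · have hs0 : |sl0 N K φF φ2F| ≤ |φ2F| := le_of_not_ge hcase
      have htri : 2*|φ2F| ≤ |sl0 N K φF φ2F + 2*φ2F| + |sl0 N K φF φ2F| := by
        have h := abs_add_le (sl0 N K φF φ2F + 2*φ2F) (-(sl0 N K φF φ2F))
        rw [abs_neg, show sl0 N K φF φ2F + 2*φ2F + -(sl0 N K φF φ2F) = 2*φ2F by ring] at h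
        have h2 : |(2:ℝ)*φ2F| = 2*|φ2F| := by rw [abs_mul, abs_two]
        linarith
      have t2 : |φ2F| ≤ |sl0 N K φF φ2F + 2*φ2F| := by linarith
      have hc : (((N+1-(K+2)).toNat : ℤ) = N-K-1) := by omega
      have hc' : (((N+1-(K+2)).toNat : ℕ) : ℝ) = (N:ℝ)-(K:ℝ)-1 := by exact_mod_cast hc
      have hk := key (K+2) N (sl0 N K φF φ2F + 2*φ2F) ((N:ℝ)-(K:ℝ)-1) (by omega) le_rfl
        (by omega) (fun i hi _ => Dd_vh_hi N K φF φ2F hN1 i hi) hc'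
      have t1 : |φ2F| ^ p ≤ |sl0 N K φF φ2F + 2*φ2F| ^ p :=
        Real.rpow_le_rpow (abs_nonneg _) t2 hp0.le
      have hA : (1/4:ℝ) ≤ eps N * ((N:ℝ)-(K:ℝ)-1) := by
        unfold eps
        rw [div_mul_eq_mul_div, one_mul, le_div_iff₀ hNR]
        have h4 : (N:ℝ) ≤ 4*((N:ℝ)-(K:ℝ)-1) := by
          exact_mod_cast (by omega : (N:ℤ) ≤ 4*(N-K-1))
        linarith
      calc (1/4) * |φ2F| ^ p
          ≤ (eps N * ((N:ℝ)-(K:ℝ)-1)) * |sl0 N K φF φ2F + 2*φ2F| ^ p :=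
            mul_le_mul hA t1 hphinn (by positivity)
        _ = eps N * (((N:ℝ)-(K:ℝ)-1) * |sl0 N K φF φ2F + 2*φ2F| ^ p) := by ring
        _ ≤ SD := hk
  set D : ℝ := SD ^ (1/p) with hDdef
  have hD4 : |φ2F|/4 ≤ D := by
    have h1 : ((1/4) * |φ2F| ^ p) ^ (1/p) ≤ D := by
      rw [hDdef]
      exact Real.rpow_le_rpow (by positivity) hSD4 (by positivity)
    have h2 : ((1/4 : ℝ) * |φ2F| ^ p) ^ (1/p) = (1/4 : ℝ) ^ (1/p) * |φ2F| := by
      rw [Real.mul_rpow (by norm_num) (Real.rpow_nonneg (abs_nonneg _) _),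
          ← Real.rpow_mul (abs_nonneg _), mul_one_div, div_self hpne, Real.rpow_one]
    have h3 : (1/4:ℝ) ≤ (1/4:ℝ) ^ (1/p) := by
      have h := Real.rpow_le_rpow_of_exponent_ge (by norm_num : (0:ℝ) < 1/4)
        (by norm_num : (1/4:ℝ) ≤ 1) (show 1/p ≤ 1 from by rw [div_le_one hp0]; exact hp)
      rwa [Real.rpow_one] at h
    calc |φ2F|/4 = (1/4) * |φ2F| := by ring
      _ ≤ (1/4:ℝ) ^ (1/p) * |φ2F| := mul_le_mul_of_nonneg_right h3 (abs_nonneg _)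
      _ = ((1/4) * |φ2F| ^ p) ^ (1/p) := h2.symm
      _ ≤ D := h1
  have hDpos : 0 < D := lt_of_lt_of_le (by positivity) hD4
  refine le_trans (csInf_le ⟨(0:ℝ), ?_⟩
      ⟨(fun i => D⁻¹ * vh N K φF φ2F i), ?_, ?_, ?_, rfl⟩) ?_
  · -- every element of the outer set is nonnegative
    rintro x ⟨v, -, -, -, rfl⟩
    refine sSup_symm_nonneg _
      (eps N * ∑ j ∈ Finset.Icc (-N+1) (N-1), Lqcf N K φF φ2F v j * tent N p j)
      ⟨tent N p, tent_bd1 N p hN1, tent_bd2 N p hN1,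
        lqNorm_one N p hN1 hp _ (fun j => Dd_tent_abs N p hN1 j), rfl⟩
      ⟨fun j => -(tent N p j), ?_, ?_, ?_, ?_⟩
    · show -(tent N p (-N)) = 0
      rw [tent_bd1 N p hN1, neg_zero]
    · show -(tent N p N) = 0
      rw [tent_bd2 N p hN1, neg_zero]
    · refine lqNorm_one N p hN1 hp _ (fun j => ?_)
      rw [Dd_neg N (tent N p) j, abs_neg]
      exact Dd_tent_abs N p hN1 j
    · have h : ∑ j ∈ Finset.Icc (-N+1) (N-1), Lqcf N K φF φ2F v j * (-(tent N p j))
          = -∑ j ∈ Finset.Icc (-N+1) (N-1), Lqcf N K φF φ2F v j * tent N p j := by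
        rw [← Finset.sum_neg_distrib]
        exact Finset.sum_congr rfl (fun j _ => by ring)
      rw [h]; ring
  · -- boundary value at -N
    show D⁻¹ * vh N K φF φ2F (-N) = 0
    rw [vh_lin N K φF φ2F (-N) (by omega)]
    push_cast
    ring
  · -- boundary value at N
    show D⁻¹ * vh N K φF φ2F N = 0
    rw [vh_aff N K φF φ2F N (by omega)]
    unfold sl0
    have h2N : (2:ℝ)*(N:ℝ) ≠ 0 := by positivity
    field_simp
    try ring
  · -- unit norm
    show lpNorm N p (fun j => Dd N (fun i => D⁻¹ * vh N K φF φ2F i) j) = 1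
    have h1 : (fun j => Dd N (fun i => D⁻¹ * vh N K φF φ2F i) j)
        = fun j => D⁻¹ * Dd N (vh N K φF φ2F) j := funext (fun j => Dd_smul N D⁻¹ _ j)
    rw [h1]
    unfold lpNorm
    have h2 : ∑ j ∈ Finset.Icc (-N+1) N, |D⁻¹ * Dd N (vh N K φF φ2F) j| ^ p
        = D⁻¹ ^ p * ∑ j ∈ Finset.Icc (-N+1) N, |Dd N (vh N K φF φ2F) j| ^ p := by
      rw [Finset.mul_sum]
      refine Finset.sum_congr rfl (fun j _ => ?_)
      rw [abs_mul, abs_of_nonneg (inv_nonneg.mpr hDpos.le),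
          Real.mul_rpow (inv_nonneg.mpr hDpos.le) (abs_nonneg _)]
    rw [h2, show eps N * (D⁻¹ ^ p * ∑ j ∈ Finset.Icc (-N+1) N, |Dd N (vh N K φF φ2F) j| ^ p)
          = D⁻¹ ^ p * SD from by rw [hSDdef]; ring,
        Real.mul_rpow (Real.rpow_nonneg (inv_nonneg.mpr hDpos.le) p) hSDnn,
        ← Real.rpow_mul (inv_nonneg.mpr hDpos.le), mul_one_div, div_self hpne, Real.rpow_one,
        ← hDdef]
    exact inv_mul_cancel₀ hDpos.ne'
  · -- the sup over w is small
    refine Real.sSup_le ?_ (by exact mul_nonneg (by linarith) hXnn)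
    rintro y ⟨w, -, -, hw3, rfl⟩
    have hDw : ∀ i, -N+1 ≤ i → i ≤ N → |Dd N w i| ≤ (N:ℝ) ^ ((p-1)/p) := by
      intro i hi1 hi2
      by_cases hp1 : p = 1
      · unfold lqNorm at hw3; rw [if_pos hp1] at hw3
        have hbd : BddAbove ((fun j => |Dd N w j|) '' ↑(Finset.Icc (-N+1) N)) :=
          (Set.Finite.image _ (Finset.finite_toSet _)).bddAbove
        have hmem : |Dd N w i| ∈ (fun j => |Dd N w j|) '' ↑(Finset.Icc (-N+1) N) :=
          Set.mem_image_of_mem _ (by simp only [Finset.coe_Icc, Set.mem_Icc]; omega)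
        have hle := le_csSup hbd hmem
        rw [hw3] at hle
        rw [hp1, show ((1:ℝ)-1)/1 = 0 by norm_num, Real.rpow_zero]
        exact hle
      · have hp1' : 1 < p := lt_of_le_of_ne hp (Ne.symm hp1)
        have hpm : (0:ℝ) < p - 1 := by linarith
        unfold lqNorm at hw3; rw [if_neg hp1] at hw3
        have hXnn' : 0 ≤ eps N * ∑ j ∈ Finset.Icc (-N+1) N, |Dd N w j| ^ (p/(p-1)) :=
          mul_nonneg hεpos.le (Finset.sum_nonneg fun j _ => Real.rpow_nonneg (abs_nonneg _) _)
        have hX1 : eps N * ∑ j ∈ Finset.Icc (-N+1) N, |Dd N w j| ^ (p/(p-1)) = 1 := by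
          have h := congrArg (fun t : ℝ => t ^ (p/(p-1))) hw3
          simp only at h
          rwa [← Real.rpow_mul hXnn', show (p-1)/p * (p/(p-1)) = 1 from by
              field_simp, Real.rpow_one, Real.one_rpow] at h
        have hterm : |Dd N w i| ^ (p/(p-1))
            ≤ ∑ j ∈ Finset.Icc (-N+1) N, |Dd N w j| ^ (p/(p-1)) :=
          Finset.single_le_sum (fun j _ => Real.rpow_nonneg (abs_nonneg _) _)
            (Finset.mem_Icc.mpr ⟨hi1, hi2⟩)
        have h5 : eps N * |Dd N w i| ^ (p/(p-1)) ≤ 1 := by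
          have h5' := mul_le_mul_of_nonneg_left hterm hεpos.le
          rwa [hX1] at h5'
        have heq : eps N * (N:ℝ) = 1 := by unfold eps; field_simp
        have h6 : eps N * |Dd N w i| ^ (p/(p-1)) ≤ eps N * (N:ℝ) := by rw [heq]; exact h5
        have hterm2 : |Dd N w i| ^ (p/(p-1)) ≤ (N:ℝ) := le_of_mul_le_mul_left h6 hεpos
        calc |Dd N w i| = (|Dd N w i| ^ (p/(p-1))) ^ ((p-1)/p) := by
              rw [← Real.rpow_mul (abs_nonneg _), show (p/(p-1))*((p-1)/p) = 1 from by
                field_simp, Real.rpow_one]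
          _ ≤ (N:ℝ) ^ ((p-1)/p) := Real.rpow_le_rpow
              (Real.rpow_nonneg (abs_nonneg _) _) hterm2 (by positivity)
    have hsub : ({K-1, K, K+1} : Finset ℤ) ⊆ Finset.Icc (-N+1) (N-1) := by
      intro x hx
      simp only [Finset.mem_insert, Finset.mem_singleton] at hx
      simp only [Finset.mem_Icc]
      omega
    have hred : ∑ j ∈ Finset.Icc (-N+1) (N-1), Lqcf N K φF φ2F (vh N K φF φ2F) j * w j
        = ∑ j ∈ ({K-1, K, K+1} : Finset ℤ), Lqcf N K φF φ2F (vh N K φF φ2F) j * w j := by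
      refine (Finset.sum_subset hsub ?_).symm
      intro j hj hj'
      simp only [Finset.mem_insert, Finset.mem_singleton] at hj'
      simp only [Finset.mem_Icc] at hj
      rw [row_zero N K φF φ2F hN1 hK2 j (by omega), zero_mul]
    have htri : ∑ j ∈ ({K-1, K, K+1} : Finset ℤ), Lqcf N K φF φ2F (vh N K φF φ2F) j * w j
        = (-(φ2F * (φF + 5*φ2F)) / eps N) * w (K-1)
          + (-(φF * (φF + 5*φ2F) + φ2F * (2*(φF + 5*φ2F) - (φF + 3*φ2F))) / eps N) * w K
          + ((φF + 4*φ2F) * (φF + 3*φ2F) / eps N) * w (K+1) := by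
      rw [Finset.sum_insert (by simp only [Finset.mem_insert, Finset.mem_singleton]; omega),
          Finset.sum_insert (by simp only [Finset.mem_singleton]; omega),
          Finset.sum_singleton,
          row_Km1 N K φF φ2F hN1 hK2, row_K N K φF φ2F hN1 hK2, row_Kp1 N K φF φ2F hN1 hK2]
      ring
    have hy : eps N * ∑ j ∈ Finset.Icc (-N+1) (N-1),
          Lqcf N K φF φ2F (fun i => D⁻¹ * vh N K φF φ2F i) j * w j
        = D⁻¹ * (eps N * ((-(φ2F * (φF + 5*φ2F))) * (-(Dd N w K))
            + ((φF + 4*φ2F) * (φF + 3*φ2F)) * Dd N w (K+1))) := by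
      rw [Finset.sum_congr rfl (fun j _ => by
            rw [Lqcf_smul N K φF φ2F D⁻¹ (vh N K φF φ2F) j, mul_assoc]),
          ← Finset.mul_sum, hred, htri]
      unfold Dd
      field_simp
      ring
    rw [hy]
    have hb1 : |Dd N w K| ≤ (N:ℝ) ^ ((p-1)/p) := hDw K (by omega) (by omega)
    have hb2 : |Dd N w (K+1)| ≤ (N:ℝ) ^ ((p-1)/p) := hDw (K+1) (by omega) (by omega)
    have hin : |(-(φ2F * (φF + 5*φ2F))) * (-(Dd N w K))
          + ((φF + 4*φ2F) * (φF + 3*φ2F)) * Dd N w (K+1)| ≤ E * (N:ℝ) ^ ((p-1)/p) := by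
      calc |(-(φ2F * (φF + 5*φ2F))) * (-(Dd N w K))
            + ((φF + 4*φ2F) * (φF + 3*φ2F)) * Dd N w (K+1)|
          ≤ |(-(φ2F * (φF + 5*φ2F))) * (-(Dd N w K))|
            + |((φF + 4*φ2F) * (φF + 3*φ2F)) * Dd N w (K+1)| := abs_add_le _ _
        _ = |φ2F * (φF + 5*φ2F)| * |Dd N w K|
            + |(φF + 4*φ2F) * (φF + 3*φ2F)| * |Dd N w (K+1)| := by
            rw [abs_mul, abs_mul, abs_neg, abs_neg]
        _ ≤ |φ2F * (φF + 5*φ2F)| * (N:ℝ) ^ ((p-1)/p)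
            + |(φF + 4*φ2F) * (φF + 3*φ2F)| * (N:ℝ) ^ ((p-1)/p) :=
            add_le_add (mul_le_mul_of_nonneg_left hb1 (abs_nonneg _))
              (mul_le_mul_of_nonneg_left hb2 (abs_nonneg _))
        _ = E * (N:ℝ) ^ ((p-1)/p) := by rw [hE]; ring
    have hDinvle : D⁻¹ ≤ 4 / |φ2F| := by
      have h := inv_anti₀ (show (0:ℝ) < |φ2F|/4 by positivity) hD4
      rwa [inv_div] at h
    have hrw : eps N * (N:ℝ) ^ ((p-1)/p) = (N:ℝ) ^ (-(1/p)) := by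
      have h1 : eps N = (N:ℝ) ^ (-1 : ℝ) := by
        unfold eps; rw [Real.rpow_neg hNR.le, Real.rpow_one, one_div]
      rw [h1, ← Real.rpow_add hNR]
      congr 1
      field_simp
      ring
    have hBnn : (0:ℝ) ≤ (N:ℝ) ^ ((p-1)/p) := Real.rpow_nonneg hNR.le _
    calc D⁻¹ * (eps N * ((-(φ2F * (φF + 5*φ2F))) * (-(Dd N w K))
            + ((φF + 4*φ2F) * (φF + 3*φ2F)) * Dd N w (K+1)))
        ≤ |D⁻¹ * (eps N * ((-(φ2F * (φF + 5*φ2F))) * (-(Dd N w K))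
            + ((φF + 4*φ2F) * (φF + 3*φ2F)) * Dd N w (K+1)))| := le_abs_self _
      _ = D⁻¹ * (eps N * |(-(φ2F * (φF + 5*φ2F))) * (-(Dd N w K))
            + ((φF + 4*φ2F) * (φF + 3*φ2F)) * Dd N w (K+1)|) := by
          rw [abs_mul, abs_mul, abs_of_nonneg (inv_nonneg.mpr hDpos.le),
            abs_of_nonneg hεpos.le]
      _ ≤ D⁻¹ * (eps N * (E * (N:ℝ) ^ ((p-1)/p))) :=
          mul_le_mul_of_nonneg_left (mul_le_mul_of_nonneg_left hin hεpos.le)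
            (inv_nonneg.mpr hDpos.le)
      _ ≤ (4 / |φ2F|) * (eps N * (E * (N:ℝ) ^ ((p-1)/p))) :=
          mul_le_mul_of_nonneg_right hDinvle
            (mul_nonneg hεpos.le (mul_nonneg hEnn hBnn))
      _ = E * 4 / |φ2F| * (eps N * (N:ℝ) ^ ((p-1)/p)) := by ring
      _ = E * 4 / |φ2F| * (N:ℝ) ^ (-(1/p)) := by rw [hrw]
      _ ≤ (E * 4 / |φ2F| + 1) * (N:ℝ) ^ (-(1/p)) := by nlinarith
end
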